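/- arXiv:2512.09708 — 6 statements merged into one kernel-verified Lean document; each statement's English description precedes it below -/
import Mathlib

section
/- Let G : [0,∞)^K → ℝ be a concave function with G(1,…,1) ≤ 1 and G(u) ≥ 0 for all u ∈ [0,∞)^K. Then there exists a vector w ∈ ℝ^K with w_k ≥ 0 for all k and ∑_k w_k ≤ 1 such that G(u) ≤ 1 + ∑_{k=1}^K w_k (u_k − 1) for all u ∈ [0,∞)^K. -/
open BigOperators

/-- a concave function `G` on the orthant `[0,∞)^K` which is
nonnegative and satisfies `G(1,…,1) ≤ 1` is dominated by an affine function
`u ↦ 1 + ∑ w_k (u_k - 1)` with nonnegative weights summing to at most 1. -/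
theorem stmt_4 (K : ℕ) (hK : 1 ≤ K) (G : (Fin K → ℝ) → ℝ)
    (hconc : ConcaveOn ℝ {u : Fin K → ℝ | ∀ k, 0 ≤ u k} G)
    (h1 : G (fun _ => 1) ≤ 1)
    (hnn : ∀ u : Fin K → ℝ, (∀ k, 0 ≤ u k) → 0 ≤ G u) :
    ∃ w : Fin K → ℝ, (∀ k, 0 ≤ w k) ∧ ∑ k, w k ≤ 1 ∧
      ∀ u : Fin K → ℝ, (∀ k, 0 ≤ u k) → G u ≤ 1 + ∑ k, w k * (u k - 1) := by
  classical
  set one : Fin K → ℝ := fun _ => 1 with hone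
  set S : Set ((Fin K → ℝ) × ℝ) := {p | (∀ k, 0 ≤ p.1 k) ∧ p.2 ≤ G p.1} with hSdef
  have hSconv : Convex ℝ S := hconc.convex_hypograph
  set x0 : (Fin K → ℝ) × ℝ := (one, G one) with hx0def
  have hG1nn : 0 ≤ G one := hnn one fun k => zero_le_one
  -- an open convex subset of S
  set T : Set ((Fin K → ℝ) × ℝ) := {p | (∀ k, 0 < p.1 k) ∧ p.2 < 0} with hTdef
  have hT_sub : T ⊆ S := by
    rintro ⟨u, t⟩ ⟨hu, ht⟩
    exact ⟨fun k => (hu k).le, ht.le.trans (hnn u fun k => (hu k).le)⟩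
  have hT_open : IsOpen T := by
    have h1' : IsOpen {p : (Fin K → ℝ) × ℝ | ∀ k, 0 < p.1 k} := by
      rw [show {p : (Fin K → ℝ) × ℝ | ∀ k, 0 < p.1 k} = ⋂ k, {p | 0 < p.1 k} by
        ext p; simp]
      exact isOpen_iInter_of_finite fun k =>
        isOpen_lt continuous_const ((continuous_apply k).comp continuous_fst)
    have h2' : IsOpen {p : (Fin K → ℝ) × ℝ | p.2 < 0} :=
      isOpen_lt continuous_snd continuous_const
    have : T = {p : (Fin K → ℝ) × ℝ | ∀ k, 0 < p.1 k} ∩ {p | p.2 < 0} := by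
      ext p; simp [hTdef, Set.mem_setOf_eq]
    rw [this]; exact h1'.inter h2'
  have hT_int : T ⊆ interior S := interior_maximal hT_sub hT_open
  have hpt : ((one, (-1:ℝ)) : (Fin K → ℝ) × ℝ) ∈ interior S :=
    hT_int ⟨fun k => one_pos, by norm_num⟩
  -- x0 is not in the interior of S
  have hx0_not : x0 ∉ interior S := by
    intro hmem
    have hSnx : S ∈ nhds x0 := mem_interior_iff_mem_nhds.mp hmem
    have hφ : Continuous fun t : ℝ => ((one, G one + t) : (Fin K → ℝ) × ℝ) := by
      apply Continuous.prodMk continuous_const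
      exact continuous_const.add continuous_id
    have hev : ∀ᶠ t in nhds (0:ℝ), ((one, G one + t) : (Fin K → ℝ) × ℝ) ∈ S := by
      have ht : Filter.Tendsto (fun t : ℝ => ((one, G one + t) : (Fin K → ℝ) × ℝ))
          (nhds 0) (nhds x0) := by
        have := hφ.tendsto 0
        simpa [hx0def] using this
      exact ht.eventually_mem hSnx
    rcases Metric.eventually_nhds_iff.mp hev with ⟨ε, hε, hball⟩
    have h2 := hball (y := ε/2)
      (by rw [Real.dist_eq, sub_zero, abs_of_pos (half_pos hε)]; linarith)
    have := h2.2
    simp only at this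
    linarith [half_pos hε]
  obtain ⟨f, hf⟩ := geometric_hahn_banach_open_point hSconv.interior isOpen_interior hx0_not
  -- f ≤ f x0 on all of S, by taking limits along segments toward the interior point
  have hle : ∀ p ∈ S, f p ≤ f x0 := by
    intro p hp
    set b : (Fin K → ℝ) × ℝ := (one, -1) with hbdef
    have hcont : Filter.Tendsto (fun t : ℝ => f (t • b + (1 - t) • p))
        (nhdsWithin 0 (Set.Ioi 0)) (nhds (f p)) := by
      have hc : Continuous fun t : ℝ => f (t • b + (1 - t) • p) := by
        apply f.continuous.comp
        exact ((continuous_id.smul continuous_const).add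
          ((continuous_const.sub continuous_id).smul continuous_const))
      have := (hc.tendsto 0).mono_left (nhdsWithin_le_nhds (s := Set.Ioi (0:ℝ)))
      simpa using this
    refine le_of_tendsto hcont ?_
    filter_upwards [Ioo_mem_nhdsGT_of_mem (by constructor <;> norm_num : (0:ℝ) ∈ Set.Ico 0 1)]
      with t ht
    exact (hf _ (hSconv.combo_interior_closure_mem_interior hpt (subset_closure hp)
      ht.1 (by linarith [ht.2]) (by ring))).le
  -- decompose f
  set c : ℝ := f (0, 1) with hcdef
  have hf_eq : ∀ (u : Fin K → ℝ) (t : ℝ), f (u, t) = f (u, 0) + t * c := by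
    intro u t
    have h : ((u, t) : (Fin K → ℝ) × ℝ) = (u, 0) + t • ((0 : Fin K → ℝ), (1:ℝ)) := by
      ext <;> simp
    rw [h, f.map_add, f.map_smul, smul_eq_mul]
  set e : Fin K → (Fin K → ℝ) := fun i => fun j => if i = j then 1 else 0 with hedef
  set a : Fin K → ℝ := fun k => f (e k, 0) with hadef
  have hg : ∀ u : Fin K → ℝ, f (u, 0) = ∑ k, u k * a k := by
    intro u
    have h : ((u, (0:ℝ)) : (Fin K → ℝ) × ℝ) = ∑ k, u k • ((e k, (0:ℝ)) : (Fin K → ℝ) × ℝ) := by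
      rw [Prod.ext_iff]
      constructor
      · rw [Prod.fst_sum]
        simpa [hedef] using pi_eq_sum_univ u
      · rw [Prod.snd_sum]
        simp
    rw [h, map_sum]
    apply Finset.sum_congr rfl
    intro k _
    rw [f.map_smul, smul_eq_mul]
  -- c > 0
  have hc : 0 < c := by
    have h := hf _ hpt
    rw [show ((one, (-1:ℝ)) : (Fin K → ℝ) × ℝ) = (one, -1) from rfl] at h
    rw [hx0def] at h
    rw [hf_eq one (-1), hf_eq one (G one)] at h
    nlinarith
  -- useful: key inequality on S
  have key : ∀ u : Fin K → ℝ, (∀ k, 0 ≤ u k) →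
      (∑ k, u k * a k) + G u * c ≤ (∑ k, a k) + G one * c := by
    intro u hu
    have h := hle (u, G u) ⟨hu, le_rfl⟩
    rw [hx0def, hf_eq u (G u), hf_eq one (G one), hg u, hg one] at h
    simp only [hone, one_mul] at h
    exact h
  -- each a k ≤ 0
  have ha_nonpos : ∀ k, a k ≤ 0 := by
    intro k
    by_contra hak
    push_neg at hak
    set s : ℝ := (G one * c + 1) / a k with hsdef
    have hs : 0 ≤ s := by positivity
    have hmem : ∀ j, 0 ≤ (one + s • e k) j := by
      intro j
      simp only [Pi.add_apply, Pi.smul_apply, hone, hedef, smul_eq_mul]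
      by_cases h : k = j <;> simp [h] <;> linarith
    have h := hle (one + s • e k, 0) ⟨hmem, hnn _ hmem⟩
    rw [hx0def, hf_eq _ 0, hf_eq one (G one)] at h
    have hlin : f ((one + s • e k, 0) : (Fin K → ℝ) × ℝ) = f (one, 0) + s * a k := by
      have : ((one + s • e k, (0:ℝ)) : (Fin K → ℝ) × ℝ)
          = (one, 0) + s • ((e k, 0) : (Fin K → ℝ) × ℝ) := by
        ext <;> simp
      rw [this, f.map_add, f.map_smul, smul_eq_mul, hadef]
    rw [hf_eq _ 0] at hlin
    have hs_eq : s * a k = G one * c + 1 := by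
      rw [hsdef]; field_simp
    nlinarith
  -- define the weights
  refine ⟨fun k => -(a k) / c, fun k =>
    div_nonneg (neg_nonneg.mpr (ha_nonpos k)) hc.le, ?_, ?_⟩
  · -- sum ≤ 1
    have h0 := key 0 (fun k => le_rfl)
    simp only [Pi.zero_apply, zero_mul, Finset.sum_const_zero, zero_add] at h0
    have hG0 : 0 ≤ G 0 := hnn 0 fun k => le_rfl
    have hsum : ∑ k, -(a k) / c = (-(∑ k, a k)) / c := by
      rw [← Finset.sum_div, Finset.sum_neg_distrib]
    rw [hsum, div_le_one hc]
    nlinarith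
  · intro u hu
    have h := key u hu
    have hsum : ∑ k, -(a k) / c * (u k - 1) = ((∑ k, a k) - ∑ k, u k * a k) / c := by
      rw [← Finset.sum_sub_distrib, Finset.sum_div]
      apply Finset.sum_congr rfl
      intro k _
      field_simp; ring
    rw [hsum]
    have hstep : (G u - 1) * c ≤ (∑ k, a k) - ∑ k, u k * a k := by nlinarith
    have := (le_div_iff₀ hc).mpr hstep
    linarith
end

section
/- Let F : [0,∞)^K → [0,∞) be a function satisfying: for all n ≥ 1, all u^(1),…,u^(n) ∈ [0,∞)^K, and all probability weights q ∈ Δ_n with ∑_j q_j u^(j) = (1,…,1), we have ∑_j q_j F(u^(j)) ≤ 1. Then there exists w ∈ [0,1]^K with ∑_k w_k ≤ 1 such that F(u) ≤ 1 + ∑_{k=1}^K w_k (u_k − 1) for every u ∈ [0,∞)^K. -/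
open BigOperators

/-- if all finite convex combinations of values of a nonnegative
`F` at points of the orthant averaging to `(1,…,1)` are at most 1, then `F` is
dominated on the orthant by `u ↦ 1 + ∑ w_k (u_k - 1)` for some `w ∈ [0,1]^K`
with `∑ w_k ≤ 1`. -/
theorem stmt_6 (K : ℕ) (hK : 1 ≤ K) (F : (Fin K → ℝ) → ℝ)
    (hF0 : ∀ u : Fin K → ℝ, (∀ k, 0 ≤ u k) → 0 ≤ F u)
    (hcomb : ∀ (n : ℕ), 1 ≤ n → ∀ (u : Fin n → Fin K → ℝ) (q : Fin n → ℝ),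
      (∀ j k, 0 ≤ u j k) → (∀ j, 0 ≤ q j) → ∑ j, q j = 1 →
      (∀ k, ∑ j, q j * u j k = 1) → ∑ j, q j * F (u j) ≤ 1) :
    ∃ w : Fin K → ℝ, (∀ k, 0 ≤ w k ∧ w k ≤ 1) ∧ ∑ k, w k ≤ 1 ∧
      ∀ u : Fin K → ℝ, (∀ k, 0 ≤ u k) → F u ≤ 1 + ∑ k, w k * (u k - 1) := by
  classical
  set one : Fin K → ℝ := fun _ => (1 : ℝ) with hone
  set G : Set ((Fin K → ℝ) × ℝ) :=
    {p | ∃ u : Fin K → ℝ, (∀ k, 0 ≤ u k) ∧ p = (u, F u)} with hGdef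
  set A : Set ((Fin K → ℝ) × ℝ) := convexHull ℝ G with hAdef
  have hGA : G ⊆ A := subset_convexHull ℝ G
  have hconvA : Convex ℝ A := convex_convexHull ℝ G
  -- Fact 1 : points of A above the all-ones vector have height at most 1
  have fact1 : ∀ t : ℝ, (one, t) ∈ A → t ≤ 1 := by
    intro t ht
    rw [hAdef, convexHull_eq] at ht
    obtain ⟨ι, s, wgt, z, hw0, hw1, hzG, hcm⟩ := ht
    rw [Finset.centerMass_eq_of_sum_1 _ _ hw1] at hcm
    set n := s.card with hn
    set e : {x // x ∈ s} ≃ Fin n := s.equivFin with he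
    have hconv : ∀ (g : ι → (Fin K → ℝ) × ℝ),
        ∑ j : Fin n, g ((e.symm j) : ι) = ∑ i ∈ s, g i := by
      intro g
      rw [Equiv.sum_comp e.symm (fun i : {x // x ∈ s} => g (i : ι))]
      exact Finset.sum_coe_sort s g
    have hconvR : ∀ (g : ι → ℝ), ∑ j : Fin n, g ((e.symm j) : ι) = ∑ i ∈ s, g i := by
      intro g
      rw [Equiv.sum_comp e.symm (fun i : {x // x ∈ s} => g (i : ι))]
      exact Finset.sum_coe_sort s g
    set q : Fin n → ℝ := fun j => wgt ((e.symm j) : ι) with hq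
    set uu : Fin n → Fin K → ℝ := fun j => (z ((e.symm j) : ι)).1 with huu
    have hz1 : ∀ i ∈ s, (∀ k, 0 ≤ (z i).1 k) ∧ (z i).2 = F ((z i).1) := by
      intro i hi
      obtain ⟨u, hu, hzu⟩ := hzG i hi
      rw [hzu]
      exact ⟨hu, rfl⟩
    have hq1 : ∑ j : Fin n, q j = 1 := by rw [hq]; rw [hconvR (fun i => wgt i)]; exact hw1
    have hn1 : 1 ≤ n := by
      by_contra hcon
      have hn0 : n = 0 := by omega
      have hemp : IsEmpty (Fin n) := by rw [hn0]; infer_instance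
      rw [Finset.univ_eq_empty, Finset.sum_empty] at hq1
      norm_num at hq1
    have hsum : ∑ j : Fin n, q j • z ((e.symm j) : ι) = (one, t) := by
      rw [hq]
      rw [hconv (fun i => wgt i • z i)]
      exact hcm
    have hsum1 : ∀ k, ∑ j : Fin n, q j * uu j k = 1 := by
      intro k
      have h := congrArg (fun p : (Fin K → ℝ) × ℝ => p.1 k) hsum
      simp only [Prod.fst_sum, Prod.smul_fst, Finset.sum_apply, Pi.smul_apply,
        smul_eq_mul] at h
      exact h
    have hsum2 : ∑ j : Fin n, q j * F (uu j) = t := by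
      have h := congrArg (fun p : (Fin K → ℝ) × ℝ => p.2) hsum
      simp only [Prod.snd_sum, Prod.smul_snd, smul_eq_mul] at h
      rw [← h]
      refine Finset.sum_congr rfl fun j _ => ?_
      congr 1
      exact ((hz1 _ (e.symm j).2).2).symm
    rw [← hsum2]
    exact hcomb n hn1 uu q (fun j k => (hz1 _ (e.symm j).2).1 k)
      (fun j => hw0 _ (e.symm j).2) hq1 hsum1
  -- the "hypograph" of A
  set B : Set ((Fin K → ℝ) × ℝ) := {p | ∃ t₀ : ℝ, (p.1, t₀) ∈ A ∧ p.2 ≤ t₀} with hBdef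
  have hBconv : Convex ℝ B := by
    rintro ⟨x, t⟩ ⟨x0, hx0A, hx0le⟩ ⟨y, r⟩ ⟨y0, hy0A, hy0le⟩ a b ha hb hab
    refine ⟨a * x0 + b * y0, ?_, ?_⟩
    · have h := hconvA hx0A hy0A ha hb hab
      simpa [Prod.smul_mk, Prod.mk_add_mk, smul_eq_mul] using h
    · simp only [Prod.smul_mk, Prod.mk_add_mk, smul_eq_mul]
      have h1 : a * t ≤ a * x0 := mul_le_mul_of_nonneg_left hx0le ha
      have h2 : b * r ≤ b * y0 := mul_le_mul_of_nonneg_left hy0le hb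
      linarith
  have hGB : ∀ u : Fin K → ℝ, (∀ k, 0 ≤ u k) → ∀ r : ℝ, r ≤ F u → (u, r) ∈ B :=
    fun u hu r hr => ⟨F u, hGA ⟨u, hu, rfl⟩, hr⟩
  -- an open subset of B
  set U : Set ((Fin K → ℝ) × ℝ) :=
    {x : Fin K → ℝ | ∀ k, 0 < x k} ×ˢ (Set.Iio (0 : ℝ)) with hUdef
  have hUopen : IsOpen U := by
    refine IsOpen.prod ?_ isOpen_Iio
    have : {x : Fin K → ℝ | ∀ k, 0 < x k} = Set.univ.pi fun _ => Set.Ioi (0 : ℝ) := by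
      ext x
      simp [Set.mem_pi]
    rw [this]
    exact isOpen_set_pi Set.finite_univ fun _ _ => isOpen_Ioi
  have hUB : U ⊆ B := by
    rintro ⟨x, t⟩ ⟨hx, ht⟩
    exact hGB x (fun k => (hx k).le) t (le_trans (le_of_lt ht) (hF0 x fun k => (hx k).le))
  have hUint : U ⊆ interior B := interior_maximal hUB hUopen
  have hy0 : ((one, (-1 : ℝ)) : (Fin K → ℝ) × ℝ) ∈ interior B := by
    apply hUint
    constructor
    · intro k; exact one_pos
    · norm_num
  -- the point p = (1,…,1 ; 1) is not in the interior of B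
  have hpnot : ((one, (1 : ℝ)) : (Fin K → ℝ) × ℝ) ∉ interior B := by
    intro hp
    have hnb : interior B ∈ nhds ((one, (1 : ℝ)) : (Fin K → ℝ) × ℝ) :=
      isOpen_interior.mem_nhds hp
    have htend : Filter.Tendsto (fun δ : ℝ => ((one, 1 + δ) : (Fin K → ℝ) × ℝ))
        (nhdsWithin 0 (Set.Ioi 0)) (nhds ((one, (1 : ℝ)) : (Fin K → ℝ) × ℝ)) := by
      have h1 : Filter.Tendsto (fun δ : ℝ => ((one, 1 + δ) : (Fin K → ℝ) × ℝ))
          (nhds 0) (nhds ((one, 1 + 0) : (Fin K → ℝ) × ℝ)) := by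
        apply Filter.Tendsto.prodMk_nhds tendsto_const_nhds
        exact (continuous_const.add continuous_id).tendsto 0
      simpa using h1.mono_left nhdsWithin_le_nhds
    have hev := (htend.eventually hnb).and eventually_mem_nhdsWithin
    obtain ⟨δ, hδB, hδpos⟩ := hev.exists
    obtain ⟨t₀, ht₀A, ht₀le⟩ := interior_subset hδB
    have hle := fact1 t₀ ht₀A
    simp only [Set.mem_Ioi] at hδpos
    have : (1 : ℝ) + δ ≤ t₀ := ht₀le
    linarith
  -- separation
  obtain ⟨f, hf⟩ := geometric_hahn_banach_open_point hBconv.interior isOpen_interior hpnot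
  -- extend the inequality from interior B to B
  have hfB : ∀ b ∈ B, f b ≤ f ((one, (1 : ℝ)) : (Fin K → ℝ) × ℝ) := by
    intro b hb
    have htend : Filter.Tendsto (fun τ : ℝ => f (b + τ • (((one, (-1 : ℝ)) : (Fin K → ℝ) × ℝ) - b)))
        (nhdsWithin 0 (Set.Ioi 0)) (nhds (f b)) := by
      have h1 : Filter.Tendsto (fun τ : ℝ => f (b + τ • (((one, (-1 : ℝ)) : (Fin K → ℝ) × ℝ) - b)))
          (nhds 0) (nhds (f (b + (0 : ℝ) • (((one, (-1 : ℝ)) : (Fin K → ℝ) × ℝ) - b)))) := by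
        exact (f.continuous.tendsto _).comp
          ((continuous_const.add (continuous_id.smul continuous_const)).tendsto 0)
      simpa using h1.mono_left nhdsWithin_le_nhds
    refine le_of_tendsto htend ?_
    filter_upwards [Ioc_mem_nhdsGT_of_mem (by constructor <;> norm_num :
      (0 : ℝ) ∈ Set.Ico (0 : ℝ) 1)] with τ hτ
    exact le_of_lt (hf _ (hBconv.add_smul_sub_mem_interior hb hy0 hτ))
  -- decompose f
  set c : ℝ := f ((0 : Fin K → ℝ), (1 : ℝ)) with hcdef
  set v : Fin K → ℝ := fun k =>
    f (((fun j => if k = j then (1 : ℝ) else 0) : Fin K → ℝ), (0 : ℝ)) with hvdef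
  have hform : ∀ (x : Fin K → ℝ) (t : ℝ),
      f ((x, t) : (Fin K → ℝ) × ℝ) = (∑ k, x k * v k) + t * c := by
    intro x t
    have hxt : ((x, t) : (Fin K → ℝ) × ℝ)
        = ((x, (0 : ℝ)) : (Fin K → ℝ) × ℝ) + t • (((0 : Fin K → ℝ), (1 : ℝ))) := by
      simp [Prod.ext_iff]
    rw [hxt, map_add, map_smul, smul_eq_mul]
    congr 1
    set g : (Fin K → ℝ) →ₗ[ℝ] ℝ := f.toLinearMap.comp (LinearMap.inl ℝ (Fin K → ℝ) ℝ) with hg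
    have hgx : ∀ y : Fin K → ℝ, g y = f ((y, (0 : ℝ)) : (Fin K → ℝ) × ℝ) := by
      intro y; simp [hg, LinearMap.inl_apply]
    rw [← hgx, LinearMap.pi_apply_eq_sum_univ g x]
    refine Finset.sum_congr rfl fun k _ => ?_
    rw [smul_eq_mul, hgx]
  have hfp : f ((one, (1 : ℝ)) : (Fin K → ℝ) × ℝ) = (∑ k, v k) + c := by
    rw [hform]
    simp [hone]
  have hineq : ∀ (x : Fin K → ℝ) (t : ℝ), ((x, t) : (Fin K → ℝ) × ℝ) ∈ B →
      (∑ k, x k * v k) + t * c ≤ (∑ k, v k) + c := by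
    intro x t hb
    have h := hfB _ hb
    rw [hform, hfp] at h
    exact h
  have honesum : ∑ k, one k * v k = ∑ k, v k := by
    refine Finset.sum_congr rfl fun k _ => ?_
    simp [hone]
  -- c ≥ 0
  have hc0 : 0 ≤ c := by
    have hmem : ((one, (-2 : ℝ)) : (Fin K → ℝ) × ℝ) ∈ B := by
      refine hGB one (fun _ => one_pos.le) (-2) ?_
      have := hF0 one fun _ => one_pos.le
      linarith
    have h := hineq one (-2) hmem
    rw [honesum] at h
    linarith
  -- c > 0
  have hcpos : 0 < c := by
    rcases lt_or_eq_of_le hc0 with h | h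
    · exact h
    exfalso
    set k0 : Fin K := ⟨0, hK⟩ with hk0
    have haux : ∀ a : ℝ, (0 : ℝ) < a →
        ∑ k, (if k0 = k then a else 1) * v k = (∑ k, v k) + (a - 1) * v k0 := by
      intro a _
      have hterm : ∀ k, (if k0 = k then a else 1) * v k
          = v k + (if k0 = k then (a - 1) * v k else 0) := by
        intro k
        split <;> ring
      rw [Finset.sum_congr rfl fun k _ => hterm k, Finset.sum_add_distrib,
        Finset.sum_ite_eq Finset.univ k0 (fun k => (a - 1) * v k)]
      simp
    have hmemp : (((fun k => if k0 = k then (3/2 : ℝ) else 1) : Fin K → ℝ), (-1 : ℝ)) ∈ interior B := by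
      apply hUint
      constructor
      · intro k
        by_cases hkk : k0 = k <;> simp [hkk] <;> norm_num
      · norm_num
    have hmemm : (((fun k => if k0 = k then (1/2 : ℝ) else 1) : Fin K → ℝ), (-1 : ℝ)) ∈ interior B := by
      apply hUint
      constructor
      · intro k
        by_cases hkk : k0 = k <;> simp [hkk] <;> norm_num
      · norm_num
    have h1 := hf _ hmemp
    have h2 := hf _ hmemm
    rw [hform, hfp, haux (3/2) (by norm_num)] at h1
    rw [hform, hfp, haux (1/2) (by norm_num)] at h2
    rw [← h] at h1 h2
    norm_num at h1 h2
    linarith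
  -- the weights
  set w : Fin K → ℝ := fun k => -v k / c with hwdef
  have hdom : ∀ u : Fin K → ℝ, (∀ k, 0 ≤ u k) → F u ≤ 1 + ∑ k, w k * (u k - 1) := by
    intro u hu
    have h := hineq u (F u) (hGB u hu (F u) le_rfl)
    have hsw : ∑ k, w k * (u k - 1) = (∑ k, (v k - u k * v k)) / c := by
      rw [Finset.sum_div]
      refine Finset.sum_congr rfl fun k _ => ?_
      rw [hwdef]
      field_simp
      ring
    rw [hsw, Finset.sum_sub_distrib]
    have hkey : F u - 1 ≤ (∑ k, v k - ∑ k, u k * v k) / c := by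
      rw [le_div_iff₀ hcpos]
      nlinarith
    linarith
  have hw0 : ∀ k, 0 ≤ w k := by
    intro k
    by_contra hneg
    push_neg at hneg
    set T : ℝ := 2 / (-w k) with hT
    have hTpos : 0 < T := div_pos two_pos (neg_pos.mpr hneg)
    set u : Fin K → ℝ := fun j => if j = k then 1 + T else 1 with hu
    have hu0 : ∀ j, 0 ≤ u j := by
      intro j
      rw [hu]
      dsimp only
      split
      · linarith
      · norm_num
    have hd := hdom u hu0
    have hterm : ∀ j, w j * (u j - 1) = if j = k then w k * T else 0 := by
      intro j
      rw [hu]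
      dsimp only
      by_cases hjk : j = k
      · subst hjk; simp
      · simp [hjk]
    have hs : ∑ j, w j * (u j - 1) = w k * T := by
      rw [Finset.sum_congr rfl fun j _ => hterm j,
        Finset.sum_ite_eq' Finset.univ k (fun _ => w k * T)]
      simp
    have hwT : w k * T = -2 := by
      have hwne : w k ≠ 0 := ne_of_lt hneg
      rw [hT, ← mul_div_assoc, div_eq_iff (neg_ne_zero.mpr hwne)]
      ring
    have hFu := hF0 u hu0
    rw [hs, hwT] at hd
    linarith
  have hsumle : ∑ k, w k ≤ 1 := by
    have hd := hdom (fun _ => 0) (fun _ => le_refl 0)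
    have h0 := hF0 (fun _ => 0) (fun _ => le_refl 0)
    have hterm : ∀ k : Fin K, w k * ((0 : ℝ) - 1) = -w k := fun k => by ring
    rw [Finset.sum_congr rfl fun k _ => hterm k, Finset.sum_neg_distrib] at hd
    linarith
  refine ⟨w, fun k => ⟨hw0 k, ?_⟩, hsumle, hdom⟩
  exact le_trans (Finset.single_le_sum (fun j _ => hw0 j) (Finset.mem_univ k)) hsumle
end

section
/- Let F : [0,∞)^K → [0,∞) be Borel measurable and suppose that for every probability space (X, Q) and every K-tuple of e-variables E_1,…,E_K on X, the function F(E_1,…,E_K) has Q-expectation at most 1 (no monotonicity assumed). Then there exists w ∈ [0,1]^K with ∑_{k=1}^K w_k ≤ 1 such that F(u) ≤ 1 + ∑_{k=1}^K w_k (u_k − 1) for all u ∈ [0,∞)^K. -/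
/-!
Testing the merging property on finitely supported laws shows that no convex combination of
graph points `(u, F u)` has mean `≤ 1` in every `u`-coordinate and mean `> 1` in the last one.
So the convex hull of the graph misses the open convex set `{m < 1} × {t > 1}`, and a separating
hyperplane (Hahn–Banach), normalised, is the graph of the dominating affine function
`1 + ∑ w_k (u_k - 1)`. The signs of its slopes come from the unboundedness of that open set, and
`∑ w_k ≤ 1` from `0 ≤ F 0`.
-/

open MeasureTheory Set

def IsGeneralisedEMerging {ι : Type*} (F : (ι → ℝ) → ℝ) : Prop :=
  ∀ (X : Type) (_ : MeasurableSpace X) (Q : Measure X), IsProbabilityMeasure Q →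
    ∀ E : ι → X → ℝ, (∀ k, Measurable (E k)) → (∀ k x, 0 ≤ E k x) →
    (∀ k, ∫⁻ x, ENNReal.ofReal (E k x) ∂Q ≤ 1) →
    ∫⁻ x, ENNReal.ofReal (F (fun k => E k x)) ∂Q ≤ 1

lemma lintegral_ofReal_sum_smul_dirac {J : Type*} [MeasurableSpace J]
    [MeasurableSingletonClass J] [Fintype J] {w g : J → ℝ} (hw : ∀ i, 0 ≤ w i)
    (hg : ∀ i, 0 ≤ g i) :
    ∫⁻ i, ENNReal.ofReal (g i) ∂(∑ i, ENNReal.ofReal (w i) • Measure.dirac i) =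
      ENNReal.ofReal (∑ i, w i * g i) := by
  simp only [lintegral_finsetSum_measure, lintegral_smul_measure, lintegral_dirac, smul_eq_mul,
    ENNReal.ofReal_sum_of_nonneg fun i _ => mul_nonneg (hw i) (hg i), ENNReal.ofReal_mul (hw _)]

lemma IsGeneralisedEMerging.snd_le_one_of_mem_convexHull {ι : Type*} {F : (ι → ℝ) → ℝ}
    (hF : IsGeneralisedEMerging F) (hF0 : ∀ u, 0 ≤ u → 0 ≤ F u) {p : (ι → ℝ) × ℝ}
    (hp : p ∈ convexHull ℝ ((Ici 0).graphOn F)) (hp1 : p.1 ≤ 1) : p.2 ≤ 1 := by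
  obtain ⟨J, _, w, z, hw0, hw1, hz, rfl⟩ := mem_convexHull_iff_exists_fintype.1 hp
  choose u hu hzu using hz
  obtain rfl : z = fun i => (u i, F (u i)) := funext fun i => (hzu i).symm
  let _ : MeasurableSpace J := ⊤
  have _ : MeasurableSingletonClass J := ⟨fun _ => trivial⟩
  have hQ : IsProbabilityMeasure (∑ i, ENNReal.ofReal (w i) • Measure.dirac i) := by
    constructor
    simpa [hw1] using lintegral_ofReal_sum_smul_dirac hw0 (g := fun _ => 1) fun _ => zero_le_one
  have hmean : ∀ k,
      ∫⁻ i, ENNReal.ofReal (u i k) ∂(∑ i, ENNReal.ofReal (w i) • Measure.dirac i) ≤ 1 := by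
    intro k
    rw [lintegral_ofReal_sum_smul_dirac hw0 fun i => hu i k, ENNReal.ofReal_le_one]
    simpa [Prod.fst_sum, Finset.sum_apply] using hp1 k
  have := hF J ⊤ _ hQ (fun k i => u i k) (fun _ => measurable_from_top) (fun k i => hu i k) hmean
  rw [lintegral_ofReal_sum_smul_dirac hw0 fun i => hF0 _ (hu i), ENNReal.ofReal_le_one] at this
  simpa [Prod.snd_sum] using this

lemma IsGeneralisedEMerging.disjoint_convexHull {ι : Type*} {F : (ι → ℝ) → ℝ}
    (hF : IsGeneralisedEMerging F) (hF0 : ∀ u, 0 ≤ u → 0 ≤ F u) :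
    Disjoint ((univ.pi fun _ : ι => Iio 1) ×ˢ Ioi 1) (convexHull ℝ ((Ici 0).graphOn F)) := by
  rw [Set.disjoint_left]
  rintro ⟨m, t⟩ ⟨hm, ht⟩ hp
  exact (hF.snd_le_one_of_mem_convexHull hF0 hp fun k => (hm k trivial).le).not_gt ht

lemma nonneg_of_forall_sub_mul_le {x y β : ℝ} (h : ∀ s ≥ 0, x - s * y ≤ β) : 0 ≤ y := by
  by_contra! hy
  have hs := h ((|β - x| + 1) / -y) (div_nonneg (by positivity) (by linarith))
  have : (|β - x| + 1) / -y * y = -(|β - x| + 1) := by field_simp [hy.ne]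
  linarith [le_abs_self (β - x)]

lemma ContinuousLinearMap.apply_prod_eq_sum {ι : Type*} [Fintype ι] [DecidableEq ι]
    (f : ((ι → ℝ) × ℝ) →L[ℝ] ℝ) (m : ι → ℝ) (t : ℝ) :
    f (m, t) = ∑ k, m k * f (Pi.single k 1, 0) + t * f (0, 1) := by
  have hmt : (m, t) = ∑ k, m k • ((Pi.single k 1 : ι → ℝ), (0 : ℝ)) + t • (0, 1) := by
    ext <;> simp [Prod.fst_sum, Prod.snd_sum, Finset.sum_apply, Pi.single_apply]
  rw [hmt, map_add, map_sum]
  simp only [map_smul, smul_eq_mul]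

lemma closure_pi_Iio_prod_Ioi {ι : Type*} [Finite ι] (a b : ℝ) :
    closure ((univ.pi fun _ : ι => Iio a) ×ˢ Ioi b) = (univ.pi fun _ => Iic a) ×ˢ Ici b := by
  simp only [closure_prod_eq, closure_pi_set, closure_Iio, closure_Ioi]

lemma ContinuousLinearMap.le_of_forall_lt_of_mem_closure {E : Type*} [TopologicalSpace E]
    [AddCommMonoid E] [Module ℝ E] (f : E →L[ℝ] ℝ) {s : Set E} {β : ℝ}
    (h : ∀ p ∈ s, f p < β) {p : E} (hp : p ∈ closure s) : f p ≤ β :=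
  closure_lt_subset_le f.continuous continuous_const (closure_mono h hp)

lemma exists_affine_bound_of_separation {ι : Type*} [Fintype ι] [DecidableEq ι]
    {F : (ι → ℝ) → ℝ} (hF0 : 0 ≤ F 0) (f : ((ι → ℝ) × ℝ) →L[ℝ] ℝ) {β : ℝ}
    (hlt : ∀ p ∈ (univ.pi fun _ : ι => Iio 1) ×ˢ Ioi 1, f p < β)
    (hge : ∀ u, 0 ≤ u → β ≤ f (u, F u)) :
    ∃ w : ι → ℝ, (∀ k, 0 ≤ w k ∧ w k ≤ 1) ∧ ∑ k, w k ≤ 1 ∧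
      ∀ u : ι → ℝ, (∀ k, 0 ≤ u k) → F u ≤ 1 + ∑ k, w k * (u k - 1) := by
  have hle : ∀ m t, m ≤ 1 → 1 ≤ t → f (m, t) ≤ β := fun m t hm ht =>
    f.le_of_forall_lt_of_mem_closure hlt <| by
      rw [closure_pi_Iio_prod_Ioi]; exact ⟨fun k _ => hm k, ht⟩
  set a : ι → ℝ := fun k => f (Pi.single k 1, 0)
  set c := -f (0, 1)
  have hf : ∀ m t, f (m, t) = ∑ k, m k * a k - t * c := fun m t => by
    rw [f.apply_prod_eq_sum]; ring
  have ha : ∀ k, 0 ≤ a k := fun k =>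
    nonneg_of_forall_sub_mul_le (x := -c) (β := β) fun s hs => by
      have hm : Pi.single k (-s) ≤ (1 : ι → ℝ) := fun j => by
        simp only [Pi.single_apply, Pi.one_apply]; split_ifs <;> linarith
      have := hle _ 1 hm le_rfl
      simp only [hf, Pi.single_apply, ite_mul, zero_mul, Finset.sum_ite_eq', Finset.mem_univ,
        if_true] at this
      linarith
  have hc : 0 ≤ c := nonneg_of_forall_sub_mul_le (x := -c) (β := β) fun s hs => by
    have := hle 0 (1 + s) zero_le_one (by linarith)
    simp only [hf, Pi.zero_apply, zero_mul, Finset.sum_const_zero] at this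
    linarith
  have hβ : β ≤ -(F 0 * c) := by simpa [hf] using hge 0 le_rfl
  have hc0 : 0 < c := hc.lt_of_ne fun hc0 => by
    have := hlt (0, 2) (by simp [Set.mem_pi])
    simp only [hf, Pi.zero_apply, zero_mul, Finset.sum_const_zero, ← hc0, mul_zero] at this hβ
    linarith
  have hsum : ∑ k, a k - c ≤ β := by simpa [hf] using hle 1 1 le_rfl le_rfl
  have hw : ∑ k, a k / c ≤ 1 := by
    rw [← Finset.sum_div, div_le_one hc0]
    linarith [mul_nonneg hF0 hc]
  refine ⟨fun k => a k / c, fun k => ⟨div_nonneg (ha k) hc, ?_⟩, hw, fun u hu => ?_⟩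
  · exact (Finset.single_le_sum (fun j _ => div_nonneg (ha j) hc) (Finset.mem_univ k)).trans hw
  · have := hf u (F u) ▸ hge u hu
    have hexp : ∑ k, a k / c * (u k - 1) = (∑ k, u k * a k - ∑ k, a k) / c := by
      rw [← Finset.sum_sub_distrib, Finset.sum_div]
      exact Finset.sum_congr rfl fun k _ => by ring
    rw [hexp, ← sub_le_iff_le_add', le_div_iff₀ hc0]
    linarith

theorem stmt_7_general (K : ℕ) (F : (Fin K → ℝ) → ℝ)
    (hF0 : ∀ u : Fin K → ℝ, (∀ k, 0 ≤ u k) → 0 ≤ F u)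
    (hmerge : ∀ (X : Type) (_ : MeasurableSpace X) (Q : Measure X),
      IsProbabilityMeasure Q →
      ∀ E : Fin K → X → ℝ, (∀ k, Measurable (E k)) → (∀ k x, 0 ≤ E k x) →
      (∀ k, ∫⁻ x, ENNReal.ofReal (E k x) ∂Q ≤ 1) →
      ∫⁻ x, ENNReal.ofReal (F (fun k => E k x)) ∂Q ≤ 1) :
    ∃ w : Fin K → ℝ, (∀ k, 0 ≤ w k ∧ w k ≤ 1) ∧ ∑ k, w k ≤ 1 ∧
      ∀ u : Fin K → ℝ, (∀ k, 0 ≤ u k) → F u ≤ 1 + ∑ k, w k * (u k - 1) := by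
  obtain ⟨f, β, hlt, hge⟩ := geometric_hahn_banach_open
    ((convex_pi fun _ _ => convex_Iio 1).prod (convex_Ioi 1))
    ((isOpen_set_pi finite_univ fun _ _ => isOpen_Iio).prod isOpen_Ioi)
    (convex_convexHull ℝ _) (IsGeneralisedEMerging.disjoint_convexHull (F := F) hmerge hF0)
  exact exists_affine_bound_of_separation (hF0 0 fun _ => le_rfl) f hlt
    fun u hu => hge _ (subset_convexHull ℝ _ ⟨u, hu, rfl⟩)

/-- main theorem: any Borel measurable nonnegative `F` whose
composition with any tuple of e-variables is again an e-variable (no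
monotonicity assumed) satisfies `F(u) ≤ 1 + ∑ w_k (u_k - 1)` on the orthant,
for some `w ∈ [0,1]^K` with `∑ w_k ≤ 1`. -/
theorem stmt_7 (K : ℕ) (hK : 1 ≤ K) (F : (Fin K → ℝ) → ℝ)
    (hFmeas : Measurable F)
    (hF0 : ∀ u : Fin K → ℝ, (∀ k, 0 ≤ u k) → 0 ≤ F u)
    (hmerge : ∀ (X : Type) (_ : MeasurableSpace X) (Q : Measure X),
      IsProbabilityMeasure Q →
      ∀ E : Fin K → X → ℝ, (∀ k, Measurable (E k)) → (∀ k x, 0 ≤ E k x) →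
      (∀ k, ∫⁻ x, ENNReal.ofReal (E k x) ∂Q ≤ 1) →
      ∫⁻ x, ENNReal.ofReal (F (fun k => E k x)) ∂Q ≤ 1) :
    ∃ w : Fin K → ℝ, (∀ k, 0 ≤ w k ∧ w k ≤ 1) ∧ ∑ k, w k ≤ 1 ∧
      ∀ u : Fin K → ℝ, (∀ k, 0 ≤ u k) → F u ≤ 1 + ∑ k, w k * (u k - 1) :=
  stmt_7_general K F hF0 hmerge
end

section
/- A Borel measurable function F : [0,∞)^K → [0,∞) is a generalised e-merging function (F(E_1,…,E_K) is an e-variable for every K-tuple of e-variables on any common probability space) if and only if there exists w ∈ [0,1]^K with ∑_k w_k ≤ 1 such that F(u) ≤ 1 + ∑_k w_k (u_k − 1) for all u ∈ [0,∞)^K. -/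
/-!
The "if" direction is linearity of expectation. For "only if", test `F` on finitely supported
distributions: weights `p j / M` on points `u j` of the orthant, completed by an atom at the
origin, give e-variables as soon as `M ≥ max (1, maxₖ ∑ⱼ p j * u j k)`, so `∑ⱼ p j * F (u j) ≤ M`.
Hence the convex hull of the shifted graph `{(u - 1, F u - 1) | u ≥ 0}` misses the open convex cone
`{(x, t) | t > max (0, maxₖ x k)}`. A functional separating the two is nonpositive on the closure
of the cone, which forces it to be a positive multiple of `(x, t) ↦ ∑ₖ w k * x k - t` with
`w ≥ 0` and `∑ₖ w k ≤ 1`; its nonnegativity on the graph is the affine bound.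
-/

open MeasureTheory Filter Topology

def IsEMerging {ι : Type*} (F : (ι → ℝ) → ℝ) : Prop :=
  ∀ (X : Type) (_ : MeasurableSpace X) (Q : Measure X), IsProbabilityMeasure Q →
    ∀ E : ι → X → ℝ, (∀ k, Measurable (E k)) → (∀ k x, 0 ≤ E k x) →
      (∀ k, ∫⁻ x, ENNReal.ofReal (E k x) ∂Q ≤ 1) →
      ∫⁻ x, ENNReal.ofReal (F (fun k => E k x)) ∂Q ≤ 1

variable {ι : Type*}

theorem isEMerging_of_le_affine [Fintype ι] {F : (ι → ℝ) → ℝ} {w : ι → ℝ} (hw : ∀ k, 0 ≤ w k)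
    (hw1 : ∑ k, w k ≤ 1) (hF : ∀ u : ι → ℝ, (∀ k, 0 ≤ u k) → F u ≤ 1 + ∑ k, w k * (u k - 1)) :
    IsEMerging F := by
  intro X _ Q _ E hEm hE0 hE1
  have hw1' : 0 ≤ 1 - ∑ k, w k := sub_nonneg.2 hw1
  have hpt : ∀ x, ENNReal.ofReal (F fun k => E k x) ≤
      ENNReal.ofReal (1 - ∑ k, w k) + ∑ k, ENNReal.ofReal (w k) * ENNReal.ofReal (E k x) := by
    intro x
    have hwE : ∀ k ∈ Finset.univ, 0 ≤ w k * E k x := fun k _ => mul_nonneg (hw k) (hE0 k x)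
    have hsum : 1 + ∑ k, w k * (E k x - 1) = (1 - ∑ k, w k) + ∑ k, w k * E k x := by
      simp only [mul_sub, mul_one, Finset.sum_sub_distrib]; ring
    calc ENNReal.ofReal (F fun k => E k x)
        ≤ ENNReal.ofReal ((1 - ∑ k, w k) + ∑ k, w k * E k x) :=
          ENNReal.ofReal_le_ofReal (hsum ▸ hF _ fun k => hE0 k x)
      _ = _ := by
        rw [ENNReal.ofReal_add hw1' (Finset.sum_nonneg hwE), ENNReal.ofReal_sum_of_nonneg hwE]
        simp_rw [ENNReal.ofReal_mul (hw _)]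
  calc ∫⁻ x, ENNReal.ofReal (F fun k => E k x) ∂Q
      ≤ ∫⁻ x, (ENNReal.ofReal (1 - ∑ k, w k) +
          ∑ k, ENNReal.ofReal (w k) * ENNReal.ofReal (E k x)) ∂Q := lintegral_mono hpt
    _ = ENNReal.ofReal (1 - ∑ k, w k) +
          ∑ k, ENNReal.ofReal (w k) * ∫⁻ x, ENNReal.ofReal (E k x) ∂Q := by
        rw [lintegral_add_left measurable_const, lintegral_const, measure_univ, mul_one,
          lintegral_finsetSum _ fun k _ => (hEm k).ennreal_ofReal.const_mul _]
        simp_rw [lintegral_const_mul _ (hEm _).ennreal_ofReal]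
    _ ≤ ENNReal.ofReal (1 - ∑ k, w k) + ∑ k, ENNReal.ofReal (w k) * 1 := by
        gcongr with k; exact hE1 k
    _ = 1 := by
        simp only [mul_one]
        rw [← ENNReal.ofReal_one, ← ENNReal.ofReal_sum_of_nonneg fun k _ => hw k,
          ← ENNReal.ofReal_add hw1' (Finset.sum_nonneg fun k _ => hw k), sub_add_cancel]

theorem ENNReal.ofReal_sum_mul_le {κ : Type*} (s : Finset κ) {c : κ → ℝ} (hc : ∀ j ∈ s, 0 ≤ c j)
    (g : κ → ℝ) :
    ENNReal.ofReal (∑ j ∈ s, c j * g j) ≤ ∑ j ∈ s, ENNReal.ofReal (c j) * ENNReal.ofReal (g j) :=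
  (Finset.le_sum_of_subadditive _ ENNReal.ofReal_zero.le (fun _ _ => ENNReal.ofReal_add_le) s
    _).trans_eq (Finset.sum_congr rfl fun j hj => ENNReal.ofReal_mul (hc j hj))

theorem exists_isProbabilityMeasure_lintegral_eq_sum {X : Type*} [Fintype X] [MeasurableSpace X]
    [MeasurableSingletonClass X] {c : X → ℝ} (hc0 : ∀ x, 0 ≤ c x) (hc1 : ∑ x, c x = 1) :
    ∃ Q : Measure X, IsProbabilityMeasure Q ∧
      ∀ g : X → ENNReal, ∫⁻ x, g x ∂Q = ∑ x, ENNReal.ofReal (c x) * g x := by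
  have hsum : ∑ x, ENNReal.ofReal (c x) = 1 := by
    rw [← ENNReal.ofReal_sum_of_nonneg fun x _ => hc0 x, hc1, ENNReal.ofReal_one]
  refine ⟨(PMF.ofFintype _ hsum).toMeasure, inferInstance, fun g => ?_⟩
  rw [lintegral_fintype]
  refine Finset.sum_congr rfl fun x _ => ?_
  rw [PMF.toMeasure_apply_singleton _ _ (measurableSet_singleton x), PMF.ofFintype_apply, mul_comm]

theorem IsEMerging.sum_mul_le {F : (ι → ℝ) → ℝ} (hF : IsEMerging F) {κ : Type} [Fintype κ]
    {p : κ → ℝ} (hp0 : ∀ j, 0 ≤ p j) (hp1 : ∑ j, p j = 1) {u : κ → ι → ℝ}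
    (hu : ∀ j k, 0 ≤ u j k) {M : ℝ} (hM : 1 ≤ M) (hmean : ∀ k, ∑ j, p j * u j k ≤ M) :
    ∑ j, p j * F (u j) ≤ M := by
  have hM0 : 0 < M := zero_lt_one.trans_le hM
  -- the atom at the origin (`none`) adds nothing to the means and a nonnegative term to the merged
  -- integral
  let c : Option κ → ℝ := fun x => x.elim (1 - M⁻¹) fun j => p j / M
  let E : ι → Option κ → ℝ := fun k x => x.elim 0 fun j => u j k
  have hc0 : ∀ x, 0 ≤ c x := by
    rintro (_ | j)
    · exact sub_nonneg.2 (inv_le_one_of_one_le₀ hM)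
    · exact div_nonneg (hp0 j) hM0.le
  have hc1 : ∑ x, c x = 1 := by
    simp [c, Fintype.sum_option, ← Finset.sum_div, hp1]
  have hE0 : ∀ k x, 0 ≤ E k x := by
    rintro k (_ | j)
    exacts [le_rfl, hu j k]
  let _ : MeasurableSpace (Option κ) := ⊤
  obtain ⟨Q, hQ, hQint⟩ := exists_isProbabilityMeasure_lintegral_eq_sum hc0 hc1
  have hmeanE : ∀ k, ∫⁻ x, ENNReal.ofReal (E k x) ∂Q ≤ 1 := by
    intro k
    simp_rw [hQint, ← ENNReal.ofReal_mul (hc0 _)]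
    rw [← ENNReal.ofReal_sum_of_nonneg fun x _ => mul_nonneg (hc0 x) (hE0 k x),
      ENNReal.ofReal_le_one]
    simp [Fintype.sum_option, c, E, div_mul_eq_mul_div, ← Finset.sum_div, div_le_one hM0, hmean k]
  have h := hF _ _ Q hQ E (fun _ => .of_discrete) hE0 hmeanE
  rw [hQint, Fintype.sum_option] at h
  have h' : ENNReal.ofReal (∑ j, p j / M * F (u j)) ≤ 1 :=
    (ENNReal.ofReal_sum_mul_le _ (fun j _ => hc0 (some j)) _).trans (le_add_self.trans h)
  simpa only [ENNReal.ofReal_le_one, div_mul_eq_mul_div, ← Finset.sum_div, div_le_one hM0] using h'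

def coneAboveMax (ι : Type*) : Set ((ι → ℝ) × ℝ) := {z | 0 < z.2 ∧ ∀ k, z.1 k < z.2}

theorem convex_coneAboveMax : Convex ℝ (coneAboveMax ι) := by
  rintro x ⟨hx0, hx⟩ y ⟨hy0, hy⟩ a b ha hb hab
  rcases ha.eq_or_lt with rfl | ha
  · rw [zero_smul, zero_add, show b = 1 by linarith, one_smul]
    exact ⟨hy0, hy⟩
  refine ⟨?_, fun k => ?_⟩ <;>
    simp only [Prod.snd_add, Prod.fst_add, Prod.smul_fst, Prod.smul_snd, Pi.add_apply,
      Pi.smul_apply, smul_eq_mul]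
  · positivity
  · nlinarith [hx k, hy k]

theorem isOpen_coneAboveMax [Finite ι] : IsOpen (coneAboveMax ι) := by
  have : coneAboveMax ι = {z | 0 < z.2} ∩ ⋂ k, {z | z.1 k < z.2} := by
    ext; simp [coneAboveMax]
  rw [this]
  exact (isOpen_lt continuous_const continuous_snd).inter
    (isOpen_iInter_of_finite fun k => isOpen_lt (by fun_prop) continuous_snd)

theorem nonpos_of_forall_add_mul_lt {a c u : ℝ} (h : ∀ τ : ℝ, 0 < τ → c + τ * a < u) : a ≤ 0 := by
  by_contra! ha
  have := h ((|u - c| + 1) / a) (by positivity)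
  rw [div_mul_cancel₀ _ ha.ne'] at this
  linarith [le_abs_self (u - c)]

theorem nonneg_of_forall_mul_lt {a u : ℝ} (h : ∀ τ : ℝ, 0 < τ → τ * a < u) : 0 ≤ u := by
  have hlim : Tendsto (fun τ : ℝ => τ * a) (𝓝[>] 0) (𝓝 0) := by
    simpa using ((continuous_mul_const a).tendsto 0).mono_left nhdsWithin_le_nhds
  exact le_of_tendsto hlim (eventually_nhdsWithin_of_forall fun τ hτ => (h τ hτ).le)

theorem ContinuousLinearMap.apply_eq_sum_mul_add_mul [Fintype ι] [DecidableEq ι]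
    (f : StrongDual ℝ ((ι → ℝ) × ℝ)) (z : (ι → ℝ) × ℝ) :
    f z = ∑ k, z.1 k * f (Pi.single k 1, 0) + z.2 * f (0, 1) := by
  have hz : z = ∑ k, z.1 k • ((Pi.single k 1 : ι → ℝ), (0 : ℝ)) +
      z.2 • ((0 : ι → ℝ), (1 : ℝ)) := by
    ext
    · simp [Prod.fst_sum, Finset.sum_apply, Pi.single_apply]
    · simp [Prod.snd_sum]
  conv_lhs => rw [hz]
  simp only [map_add, map_sum, map_smul, smul_eq_mul]

theorem exists_weights_of_disjoint_coneAboveMax [Fintype ι] {S : Set ((ι → ℝ) × ℝ)}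
    (hdisj : Disjoint (coneAboveMax ι) (convexHull ℝ S)) (hS : S.Nonempty) :
    ∃ w : ι → ℝ, (∀ k, 0 ≤ w k) ∧ ∑ k, w k ≤ 1 ∧ ∀ z ∈ S, z.2 ≤ ∑ k, w k * z.1 k := by
  classical
  obtain ⟨f, u, hfU, hfS⟩ := geometric_hahn_banach_open convex_coneAboveMax isOpen_coneAboveMax
    (convex_convexHull ℝ S) hdisj
  set a : ι → ℝ := fun k => f (Pi.single k 1, 0)
  set b := f (0, 1)
  have hf : ∀ z, f z = ∑ k, z.1 k * a k + z.2 * b := f.apply_eq_sum_mul_add_mul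
  -- `(0, 1) + τ • z` lies in the cone for every `τ > 0` and `z` in its closure
  have hC : ∀ z : (ι → ℝ) × ℝ, 0 ≤ z.2 → (∀ k, z.1 k ≤ z.2) → f z ≤ 0 := by
    intro z hz0 hz
    refine nonpos_of_forall_add_mul_lt (c := b) (u := u) fun τ hτ => ?_
    have hmem : ((0 : ι → ℝ), (1 : ℝ)) + τ • z ∈ coneAboveMax ι := by
      refine ⟨?_, fun k => ?_⟩ <;>
        simp only [Prod.fst_add, Prod.snd_add, Prod.smul_fst, Prod.smul_snd, Pi.add_apply,
          Pi.zero_apply, Pi.smul_apply, smul_eq_mul, zero_add]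
      · positivity
      · nlinarith [hz k]
    simpa [b, map_add, map_smul] using hfU _ hmem
  have hu : 0 ≤ u := nonneg_of_forall_mul_lt (a := b) fun τ hτ => by
    have := hfU (τ • ((0 : ι → ℝ), (1 : ℝ))) ⟨by simpa, fun _ => by simpa⟩
    rwa [map_smul, smul_eq_mul] at this
  have hb : b ≤ 0 := hC (0, 1) zero_le_one fun _ => zero_le_one
  have ha : ∀ k, 0 ≤ a k := fun k => by
    have := hC (-((Pi.single k 1 : ι → ℝ), (0 : ℝ))) (by simp) fun j => by
      by_cases hj : j = k <;> simp [hj]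
    rwa [map_neg, neg_nonpos] at this
  have hab : ∑ k, a k + b ≤ 0 := by
    simpa [hf] using hC (1, 1) zero_le_one fun _ => le_rfl
  have hb' : b < 0 := by
    refine hb.lt_of_ne fun hb0 => ?_
    have hsum0 : ∑ k, a k = 0 := le_antisymm (by linarith) (Finset.sum_nonneg fun k _ => ha k)
    have ha0 : ∀ k, a k = 0 := fun k =>
      (Finset.sum_eq_zero_iff_of_nonneg fun k _ => ha k).1 hsum0 k (Finset.mem_univ k)
    obtain ⟨g, hg⟩ := hS
    have h1 := hfU (0, 1) ⟨one_pos, fun _ => one_pos⟩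
    have h2 := hfS g (subset_convexHull ℝ S hg)
    simp only [hf, ha0, hb0, mul_zero, Finset.sum_const_zero, add_zero] at h1 h2
    linarith
  refine ⟨fun k => a k / -b, fun k => div_nonneg (ha k) (neg_nonneg.2 hb), ?_, fun z hz => ?_⟩
  · rw [← Finset.sum_div, div_le_one (neg_pos.2 hb')]
    linarith
  · have hfz := hu.trans (hfS z (subset_convexHull ℝ S hz))
    rw [hf] at hfz
    have : ∑ k, a k / -b * z.1 k = (∑ k, z.1 k * a k) / -b := by
      rw [Finset.sum_div]
      exact Finset.sum_congr rfl fun k _ => by ring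
    rw [this, le_div_iff₀ (neg_pos.2 hb')]
    linarith

theorem IsEMerging.disjoint_coneAboveMax_convexHull [Finite ι] {F : (ι → ℝ) → ℝ}
    (hF : IsEMerging F) :
    Disjoint (coneAboveMax ι)
      (convexHull ℝ ((fun u => (u - 1, F u - 1)) '' {u | ∀ k, 0 ≤ u k})) := by
  refine Set.disjoint_left.2 fun z ⟨hz0, hz⟩ hzS => ?_
  obtain ⟨κ, _, p, g, hp0, hp1, hg, rfl⟩ := mem_convexHull_iff_exists_fintype.1 hzS
  choose u hu hgu using hg
  have hfst : ∀ k, (∑ j, p j • g j).1 k = ∑ j, p j * u j k - 1 := fun k => by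
    simp [Prod.fst_sum, Finset.sum_apply, ← hgu, mul_sub, Finset.sum_sub_distrib, hp1]
  have hsnd : (∑ j, p j • g j).2 = ∑ j, p j * F (u j) - 1 := by
    simp [Prod.snd_sum, ← hgu, mul_sub, Finset.sum_sub_distrib, hp1]
  rw [hsnd] at hz0 hz
  simp only [hfst] at hz
  -- `M` strictly between `max (1, maxₖ ∑ⱼ p j * u j k)` and `∑ⱼ p j * F (u j)`
  have hge : ∀ a < ∑ j, p j * F (u j), ∀ᶠ M in 𝓝[<] (∑ j, p j * F (u j)), a ≤ M :=
    fun a ha => eventually_nhdsWithin_of_eventually_nhds (eventually_ge_nhds ha)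
  obtain ⟨M, hMlt, hM1, hMk⟩ := (eventually_mem_nhdsWithin.and ((hge 1 (by linarith)).and
    (eventually_all.2 fun k => hge (∑ j, p j * u j k) (by linarith [hz k])))).exists
  exact (hF.sum_mul_le hp0 hp1 (fun j => hu j) hM1 hMk).not_gt hMlt

theorem IsEMerging.exists_le_affine [Fintype ι] {F : (ι → ℝ) → ℝ} (hF : IsEMerging F) :
    ∃ w : ι → ℝ, (∀ k, 0 ≤ w k) ∧ ∑ k, w k ≤ 1 ∧
      ∀ u : ι → ℝ, (∀ k, 0 ≤ u k) → F u ≤ 1 + ∑ k, w k * (u k - 1) := by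
  obtain ⟨w, hw0, hw1, hw⟩ := exists_weights_of_disjoint_coneAboveMax
    hF.disjoint_coneAboveMax_convexHull ⟨_, 0, fun _ => le_rfl, rfl⟩
  refine ⟨w, hw0, hw1, fun u hu => ?_⟩
  have := hw _ ⟨u, hu, rfl⟩
  simp only [Pi.sub_apply, Pi.one_apply] at this
  linarith

theorem stmt_8_general (K : ℕ) (F : (Fin K → ℝ) → ℝ) :
    (∀ (X : Type) (_ : MeasurableSpace X) (Q : Measure X),
      IsProbabilityMeasure Q →
      ∀ E : Fin K → X → ℝ, (∀ k, Measurable (E k)) → (∀ k x, 0 ≤ E k x) →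
      (∀ k, ∫⁻ x, ENNReal.ofReal (E k x) ∂Q ≤ 1) →
      ∫⁻ x, ENNReal.ofReal (F (fun k => E k x)) ∂Q ≤ 1) ↔
    (∃ w : Fin K → ℝ, (∀ k, 0 ≤ w k ∧ w k ≤ 1) ∧ ∑ k, w k ≤ 1 ∧
      ∀ u : Fin K → ℝ, (∀ k, 0 ≤ u k) → F u ≤ 1 + ∑ k, w k * (u k - 1)) := by
  refine ⟨fun hF => ?_, fun ⟨w, hw, hw1, hF⟩ => isEMerging_of_le_affine (fun k => (hw k).1) hw1 hF⟩
  obtain ⟨w, hw0, hw1, hle⟩ := IsEMerging.exists_le_affine hF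
  have hw_le_one : ∀ k, w k ≤ 1 := fun k =>
    (Finset.single_le_sum (fun j _ => hw0 j) (Finset.mem_univ k)).trans hw1
  exact ⟨w, fun k => ⟨hw0 k, hw_le_one k⟩, hw1, hle⟩

/-- a Borel measurable nonnegative `F` is a generalised e-merging
function if and only if it is dominated on the orthant by
`u ↦ 1 + ∑ w_k (u_k - 1)` for some `w ∈ [0,1]^K` with `∑ w_k ≤ 1`. -/
theorem stmt_8 (K : ℕ) (hK : 1 ≤ K) (F : (Fin K → ℝ) → ℝ)
    (hFmeas : Measurable F)
    (hF0 : ∀ u : Fin K → ℝ, (∀ k, 0 ≤ u k) → 0 ≤ F u) :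
    (∀ (X : Type) (_ : MeasurableSpace X) (Q : Measure X),
      IsProbabilityMeasure Q →
      ∀ E : Fin K → X → ℝ, (∀ k, Measurable (E k)) → (∀ k x, 0 ≤ E k x) →
      (∀ k, ∫⁻ x, ENNReal.ofReal (E k x) ∂Q ≤ 1) →
      ∫⁻ x, ENNReal.ofReal (F (fun k => E k x)) ∂Q ≤ 1) ↔
    (∃ w : Fin K → ℝ, (∀ k, 0 ≤ w k ∧ w k ≤ 1) ∧ ∑ k, w k ≤ 1 ∧
      ∀ u : Fin K → ℝ, (∀ k, 0 ≤ u k) → F u ≤ 1 + ∑ k, w k * (u k - 1)) :=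
  stmt_8_general K F
end

section
/- For K = 1: if F : [0,∞) → [0,∞) satisfies ∑_j q_j F(u_j) ≤ 1 whenever q is a finite probability vector and ∑_j q_j u_j = 1 with u_j ≥ 0, then there exists w ∈ [0,1] such that F(u) ≤ 1 + w(u − 1) for all u ≥ 0. In particular F(u) ≤ max(u, 1) for all u ≥ 0, and F(1) ≤ 1. -/
/-!
Testing `F` on the two-point distributions on `a < 1 < b` with mean `1` shows that every chord
slope of `F` from `(1, 1)` to the right is at most every chord slope from `(1, 1)` to the left.
Nonnegativity of `F` bounds the right slopes by `1` and the left slopes below by `0`, so any `w`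
between the two families of slopes gives the affine majorant `1 + w (u - 1)`.
-/

open Set

def PreservesUnitMean (F : ℝ → ℝ) : Prop :=
  ∀ (n : ℕ), 1 ≤ n → ∀ (q u : Fin n → ℝ),
    (∀ j, 0 ≤ q j) → ∑ j, q j = 1 → (∀ j, 0 ≤ u j) →
    ∑ j, q j * u j = 1 → ∑ j, q j * F (u j) ≤ 1

namespace PreservesUnitMean

variable {F : ℝ → ℝ}

theorem apply_one_le (hF : PreservesUnitMean F) : F 1 ≤ 1 := by
  simpa using hF 1 le_rfl (fun _ => 1) (fun _ => 1) (fun _ => zero_le_one) (by simp)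
    (fun _ => zero_le_one) (by simp)

theorem mix_two_le (hF : PreservesUnitMean F) {p x y : ℝ} (hp0 : 0 ≤ p) (hp1 : p ≤ 1)
    (hx : 0 ≤ x) (hy : 0 ≤ y) (hmean : p * x + (1 - p) * y = 1) :
    p * F x + (1 - p) * F y ≤ 1 := by
  have h := hF 2 (by norm_num) ![p, 1 - p] ![x, y]
    (fun j => by fin_cases j <;> simp [hp0, hp1]) (by simp)
    (fun j => by fin_cases j <;> simp [hx, hy]) (by simpa using hmean)
  simpa using h

theorem two_point (hF : PreservesUnitMean F) {a b : ℝ} (ha : 0 ≤ a) (ha1 : a < 1)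
    (hb : 1 < b) : (b - 1) * (F a - 1) + (1 - a) * (F b - 1) ≤ 0 := by
  have hba : 0 < b - a := by linarith
  have h := hF.mix_two_le (p := (b - 1) / (b - a)) (x := a) (y := b)
    (div_nonneg (by linarith) hba.le) ((div_le_one hba).2 (by linarith)) ha (by linarith)
    (by field_simp; ring)
  have hq : 1 - (b - 1) / (b - a) = (1 - a) / (b - a) := by field_simp; ring
  rw [hq, div_mul_eq_mul_div, div_mul_eq_mul_div, ← add_div, div_le_one hba] at h
  linarith

end PreservesUnitMean

section TwoPoint

variable {F : ℝ → ℝ} (hF0 : ∀ u : ℝ, 0 ≤ u → 0 ≤ F u)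
  (hpair : ∀ a b : ℝ, 0 ≤ a → a < 1 → 1 < b → (b - 1) * (F a - 1) + (1 - a) * (F b - 1) ≤ 0)
include hF0 hpair

theorem le_self_of_two_point {b : ℝ} (hb : 1 < b) : F b ≤ b := by
  have := hpair 0 b le_rfl one_pos hb
  nlinarith [hF0 0 le_rfl]

/-- Pairing `a` with an arbitrarily large `b` shows that `F a - 1` is below every `ε > 0`. -/
theorem le_one_of_two_point {a : ℝ} (ha : 0 ≤ a) (ha1 : a < 1) : F a ≤ 1 := by
  refine le_of_forall_pos_le_add fun ε hε => ?_
  have hb : 1 < 1 + (1 - a) / ε := by have := div_pos (sub_pos.2 ha1) hε; linarith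
  have h := hpair a _ ha ha1 hb
  have hFb := hF0 _ (zero_le_one.trans hb.le)
  have hdiv : (1 - a) / ε * ε = 1 - a := div_mul_cancel₀ _ hε.ne'
  nlinarith

end TwoPoint

theorem exists_affine_majorant_of_two_point {F : ℝ → ℝ} (hF0 : ∀ u : ℝ, 0 ≤ u → 0 ≤ F u)
    (hF1 : F 1 ≤ 1)
    (hpair : ∀ a b : ℝ, 0 ≤ a → a < 1 → 1 < b → (b - 1) * (F a - 1) + (1 - a) * (F b - 1) ≤ 0) :
    ∃ w : ℝ, 0 ≤ w ∧ w ≤ 1 ∧ ∀ u : ℝ, 0 ≤ u → F u ≤ 1 + w * (u - 1) := by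
  set S := insert 0 ((fun b => (F b - 1) / (b - 1)) '' Ioi 1)
  set T := insert 1 ((fun a => (1 - F a) / (1 - a)) '' Ico 0 1)
  have hST : ∀ s ∈ S, ∀ t ∈ T, s ≤ t := by
    rintro s (rfl | ⟨b, hb : 1 < b, rfl⟩) t (rfl | ⟨a, ⟨ha, ha1⟩, rfl⟩)
    · exact zero_le_one
    · exact div_nonneg (sub_nonneg.2 (le_one_of_two_point hF0 hpair ha ha1)) (by linarith)
    · rw [div_le_one (by linarith)]
      linarith [le_self_of_two_point hF0 hpair hb]
    · rw [div_le_div_iff₀ (by linarith) (by linarith)]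
      linarith [hpair a b ha ha1 hb]
  obtain ⟨w, hwS, hwT⟩ :=
    exists_between_of_forall_le (insert_nonempty _ _) (insert_nonempty _ _) hST
  refine ⟨w, hwS (mem_insert _ _), hwT (mem_insert _ _), fun u hu => ?_⟩
  rcases lt_trichotomy u 1 with hu1 | rfl | hu1
  · have h := hwT (mem_insert_of_mem _ ⟨u, ⟨hu, hu1⟩, rfl⟩)
    rw [le_div_iff₀ (by linarith)] at h
    linarith
  · simpa using hF1
  · have h := hwS (mem_insert_of_mem _ ⟨u, hu1, rfl⟩)
    rw [div_le_iff₀ (by linarith)] at h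
    linarith

theorem one_add_mul_sub_one_le_max {w u : ℝ} (hw0 : 0 ≤ w) (hw1 : w ≤ 1) :
    1 + w * (u - 1) ≤ max u 1 := by
  rcases le_total u 1 with hu | hu
  · exact le_max_of_le_right (by nlinarith)
  · exact le_max_of_le_left (by nlinarith)

/-- the one-dimensional case. If `∑ q_j F(u_j) ≤ 1` for every
finite probability vector `q` and nonnegative `u` with `∑ q_j u_j = 1`, then
`F(u) ≤ 1 + w (u - 1)` for some `w ∈ [0,1]`; in particular `F(u) ≤ max u 1`
and `F 1 ≤ 1`. -/
theorem stmt_10 (F : ℝ → ℝ) (hF0 : ∀ u : ℝ, 0 ≤ u → 0 ≤ F u)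
    (hcomb : ∀ (n : ℕ), 1 ≤ n → ∀ (q u : Fin n → ℝ),
      (∀ j, 0 ≤ q j) → ∑ j, q j = 1 → (∀ j, 0 ≤ u j) →
      ∑ j, q j * u j = 1 → ∑ j, q j * F (u j) ≤ 1) :
    (∃ w : ℝ, 0 ≤ w ∧ w ≤ 1 ∧ ∀ u : ℝ, 0 ≤ u → F u ≤ 1 + w * (u - 1)) ∧
    (∀ u : ℝ, 0 ≤ u → F u ≤ max u 1) ∧ F 1 ≤ 1 := by
  have hF : PreservesUnitMean F := hcomb
  obtain ⟨w, hw0, hw1, hw⟩ := exists_affine_majorant_of_two_point hF0 hF.apply_one_le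
    fun _ _ => hF.two_point
  exact ⟨⟨w, hw0, hw1, hw⟩, fun u hu => (hw u hu).trans (one_add_mul_sub_one_le_max hw0 hw1),
    hF.apply_one_le⟩
end

section
/- Let F : [0,∞)^K → [0,∞) be a generalised e-merging function (in the sense that its composition with any tuple of e-variables on a finite probability space is an e-variable). Then its concave envelope F̂ on [0,∞)^K is finite at (1,…,1), satisfies F̂(1,…,1) ≤ 1, and F̂ is itself dominated by an affine function G with G(1,…,1) ≤ 1, G ≥ 0 on [0,∞)^K. -/
/-!
Let `C` be the convex hull of the hypograph of `F` over the orthant. Applying the merging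
property to a convex combination of hypograph points shows that `C` contains no point `(1, t)`
with `t > 1`, so `(1, 1)` is not interior to `C`, while `(1, -1)` is (as `F ≥ 0`). Separating
`(1, 1)` from the interior of `C` gives a supporting hyperplane which cannot be vertical, since
it also separates `(1, 1)` from `(1, -1)`; it is the graph of an affine `G ≥ F` with `G 1 = 1`.
Being concave, `G` also dominates the concave envelope.
-/

open BigOperators

/-- The concave envelope of `F` on the nonnegative orthant `[0,∞)^K`, valued in
`EReal`: the pointwise infimum, over all concave functions `g` on the orthant
dominating `F` there, of `g u`. -/
noncomputable def concaveEnvelope (K : ℕ) (F : (Fin K → ℝ) → ℝ)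
    (u : Fin K → ℝ) : EReal :=
  sInf {t : EReal | ∃ g : (Fin K → ℝ) → ℝ,
    ConcaveOn ℝ {v : Fin K → ℝ | ∀ k, 0 ≤ v k} g ∧
    (∀ v : Fin K → ℝ, (∀ k, 0 ≤ v k) → F v ≤ g v) ∧
    t = (g u : EReal)}

section Separation

variable {E : Type*} [AddCommGroup E] [Module ℝ E] [TopologicalSpace E]
  [IsTopologicalAddGroup E] [ContinuousSMul ℝ E]

lemma Convex.exists_snd_le_of_notMem_interior {C : Set (E × ℝ)} (hC : Convex ℝ C) {x : E}
    {s t : ℝ} (hst : s < t) (hs : (x, s) ∈ interior C) (ht : (x, t) ∉ interior C) :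
    ∃ φ : E →L[ℝ] ℝ, ∀ p ∈ C, p.2 ≤ t + φ (p.1 - x) := by
  obtain ⟨f, hf⟩ := geometric_hahn_banach_open_point hC.interior isOpen_interior ht
  have hf_le : ∀ p ∈ C, f p ≤ f (x, t) := by
    have hcl : C ⊆ closure (interior C) := by
      rw [hC.closure_interior_eq_closure_of_nonempty_interior ⟨_, hs⟩]
      exact subset_closure
    intro p hp
    exact closure_lt_subset_le f.continuous continuous_const
      (closure_mono hf (hcl hp))
  set b := f (0, 1)
  have hf_apply : ∀ u r, f (u, r) = f (u, 0) + r * b := by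
    intro u r
    rw [← smul_eq_mul, ← map_smul, ← map_add, Prod.smul_mk, smul_zero, smul_eq_mul, mul_one,
      Prod.mk_add_mk, add_zero, zero_add]
  -- `f` is not vertical: it separates `(x, s)` from `(x, t)`.
  have hb : 0 < b := by
    have := hf _ hs
    rw [hf_apply x s, hf_apply x t] at this
    nlinarith
  refine ⟨-b⁻¹ • f.comp (ContinuousLinearMap.inl ℝ E ℝ), fun p hp => ?_⟩
  have h := hf_le p hp
  rw [← Prod.mk.eta (p := p), hf_apply, hf_apply x t] at h
  have hsub : f (p.1 - x, 0) = f (p.1, 0) - f (x, 0) := by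
    rw [← map_sub, Prod.mk_sub_mk, sub_zero]
  have hdiv : (f (p.1, 0) - f (x, 0)) / b ≤ t - p.2 := by
    rw [div_le_iff₀ hb]
    linarith
  simp only [FunLike.coe_smul, Pi.smul_apply, ContinuousLinearMap.comp_apply,
    ContinuousLinearMap.inl_apply, smul_eq_mul, hsub]
  rw [neg_mul, inv_mul_eq_div]
  linarith

end Separation

lemma concaveOn_const_add_sum_mul {ι : Type*} [Fintype ι] {s : Set (ι → ℝ)} (hs : Convex ℝ s)
    (c : ℝ) (w : ι → ℝ) : ConcaveOn ℝ s fun u => c + ∑ i, w i * u i := by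
  refine (((∑ i, w i • LinearMap.proj i : (ι → ℝ) →ₗ[ℝ] ℝ).concaveOn hs).add_const c).congr
    fun u _ => ?_
  simp [add_comm]

lemma LinearMap.apply_eq_sum_mul_single {R ι : Type*} [CommSemiring R] [Fintype ι]
    [DecidableEq ι] (φ : (ι → R) →ₗ[R] R) (u : ι → R) :
    φ u = ∑ i, φ (Pi.single i 1) * u i := by
  conv_lhs => rw [← Finset.univ_sum_single u]
  simp only [map_sum]
  refine Finset.sum_congr rfl fun i _ => ?_
  rw [mul_comm, ← smul_eq_mul, ← map_smul, ← Pi.single_smul', smul_eq_mul, mul_one]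

/-- `F` is a generalised e-merging function: for every finite probability space `(Fin n, q)` and
e-variables `E 0, …, E (K-1)` on it, `F ∘ E` is again an e-variable. -/
def IsGenEMerging (K : ℕ) (F : (Fin K → ℝ) → ℝ) : Prop :=
  ∀ (n : ℕ) (q : Fin n → ℝ) (E : Fin K → Fin n → ℝ),
    (∀ j, 0 ≤ q j) → ∑ j, q j = 1 →
    (∀ k j, 0 ≤ E k j) → (∀ k, ∑ j, q j * E k j ≤ 1) →
    ∑ j, q j * F (fun k => E k j) ≤ 1

def orthantHypograph (K : ℕ) (F : (Fin K → ℝ) → ℝ) : Set ((Fin K → ℝ) × ℝ) :=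
  {p | (∀ k, 0 ≤ p.1 k) ∧ p.2 ≤ F p.1}

namespace IsGenEMerging

variable {K : ℕ} {F : (Fin K → ℝ) → ℝ}

lemma sum_mul_le_one (hF : IsGenEMerging K F) {ι : Type*} [Fintype ι] (q : ι → ℝ)
    (u : ι → Fin K → ℝ) (hq₀ : ∀ i, 0 ≤ q i) (hq₁ : ∑ i, q i = 1) (hu : ∀ i k, 0 ≤ u i k)
    (hmean : ∀ k, ∑ i, q i * u i k ≤ 1) : ∑ i, q i * F (u i) ≤ 1 := by
  let e := (Fintype.equivFin ι).symm
  have h := hF _ (fun j => q (e j)) (fun k j => u (e j) k) (fun j => hq₀ _)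
    (by rwa [e.sum_comp q]) (fun k j => hu _ k)
    (fun k => by rw [e.sum_comp fun i => q i * u i k]; exact hmean k)
  rwa [e.sum_comp fun i => q i * F (u i)] at h

lemma snd_le_one_of_mem_convexHull (hF : IsGenEMerging K F) {p : (Fin K → ℝ) × ℝ}
    (hp : p ∈ convexHull ℝ (orthantHypograph K F)) (hp₁ : ∀ k, p.1 k ≤ 1) : p.2 ≤ 1 := by
  obtain ⟨ι, _, w, z, hw₀, hw₁, hz, rfl⟩ := mem_convexHull_iff_exists_fintype.mp hp
  simp only [Prod.fst_sum, Prod.snd_sum, Prod.smul_fst, Prod.smul_snd, Finset.sum_apply,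
    Pi.smul_apply, smul_eq_mul] at hp₁ ⊢
  calc ∑ i, w i * (z i).2 ≤ ∑ i, w i * F (z i).1 :=
        Finset.sum_le_sum fun i _ => mul_le_mul_of_nonneg_left (hz i).2 (hw₀ i)
    _ ≤ 1 := hF.sum_mul_le_one w (fun i => (z i).1) hw₀ hw₁ (fun i => (hz i).1) hp₁

lemma exists_affine_majorant (hF : IsGenEMerging K F) (hF₀ : ∀ u, (∀ k, 0 ≤ u k) → 0 ≤ F u) :
    ∃ (c : ℝ) (w : Fin K → ℝ), c + ∑ k, w k = 1 ∧
      ∀ u, (∀ k, 0 ≤ u k) → F u ≤ c + ∑ k, w k * u k := by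
  set C := convexHull ℝ (orthantHypograph K F)
  have h_below : ((1 : Fin K → ℝ), (-1 : ℝ)) ∈ interior C := by
    refine mem_interior.mpr ⟨(Set.univ.pi fun _ => Set.Ioi 0) ×ˢ Set.Iio 0, ?_,
      (isOpen_set_pi Set.finite_univ fun _ _ => isOpen_Ioi).prod isOpen_Iio, ?_⟩
    · rintro ⟨u, t⟩ ⟨hu, ht⟩
      have hu₀ : ∀ k, 0 ≤ u k := fun k => (hu k (Set.mem_univ k)).le
      exact subset_convexHull ℝ _ ⟨hu₀, (Set.mem_Iio.mp ht).le.trans (hF₀ u hu₀)⟩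
    · exact ⟨fun _ _ => Set.mem_Ioi.mpr one_pos, Set.mem_Iio.mpr neg_one_lt_zero⟩
  have h_at : ((1 : Fin K → ℝ), (1 : ℝ)) ∉ interior C := by
    intro h
    have hev : ∀ᶠ t in nhds (1 : ℝ), ((1 : Fin K → ℝ), t) ∈ C :=
      (continuous_const.prodMk continuous_id).tendsto 1 |>.eventually
        (mem_interior_iff_mem_nhds.mp h)
    obtain ⟨t, ht₁, htC⟩ := hev.exists_gt
    exact (hF.snd_le_one_of_mem_convexHull htC fun _ => le_rfl).not_gt ht₁
  obtain ⟨φ, hφ⟩ := (convex_convexHull ℝ _).exists_snd_le_of_notMem_interior (by norm_num)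
    h_below h_at
  have hφ_sum : ∀ u, φ u = ∑ k, φ (Pi.single k 1) * u k := φ.toLinearMap.apply_eq_sum_mul_single
  refine ⟨1 - φ 1, fun k => φ (Pi.single k 1), ?_, fun u hu => ?_⟩
  · have h := hφ_sum 1
    simp only [Pi.one_apply, mul_one] at h
    linarith
  · have h := hφ (u, F u) (subset_convexHull ℝ _ ⟨hu, le_rfl⟩)
    rw [map_sub, hφ_sum u] at h
    linarith

end IsGenEMerging

section ConcaveEnvelope

variable {K : ℕ} {F : (Fin K → ℝ) → ℝ}

lemma concaveEnvelope_le {g : (Fin K → ℝ) → ℝ}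
    (hg : ConcaveOn ℝ {v : Fin K → ℝ | ∀ k, 0 ≤ v k} g)
    (hFg : ∀ v : Fin K → ℝ, (∀ k, 0 ≤ v k) → F v ≤ g v) (u : Fin K → ℝ) :
    concaveEnvelope K F u ≤ g u :=
  sInf_le ⟨g, hg, hFg, rfl⟩

lemma le_concaveEnvelope {u : Fin K → ℝ} (hu : ∀ k, 0 ≤ u k) :
    (F u : EReal) ≤ concaveEnvelope K F u :=
  le_sInf <| by
    rintro _ ⟨g, -, hFg, rfl⟩
    exact EReal.coe_le_coe_iff.mpr (hFg u hu)

end ConcaveEnvelope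

theorem stmt_12_general (K : ℕ) (F : (Fin K → ℝ) → ℝ)
    (hF0 : ∀ u : Fin K → ℝ, (∀ k, 0 ≤ u k) → 0 ≤ F u)
    (hmerge : ∀ (n : ℕ) (q : Fin n → ℝ) (E : Fin K → Fin n → ℝ),
      (∀ j, 0 ≤ q j) → ∑ j, q j = 1 →
      (∀ k j, 0 ≤ E k j) → (∀ k, ∑ j, q j * E k j ≤ 1) →
      ∑ j, q j * F (fun k => E k j) ≤ 1) :
    concaveEnvelope K F (fun _ => 1) ≠ ⊤ ∧
    concaveEnvelope K F (fun _ => 1) ≠ ⊥ ∧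
    concaveEnvelope K F (fun _ => 1) ≤ 1 ∧
    ∃ (c : ℝ) (w : Fin K → ℝ),
      (c + ∑ k, w k * 1 ≤ 1) ∧
      (∀ u : Fin K → ℝ, (∀ k, 0 ≤ u k) → 0 ≤ c + ∑ k, w k * u k) ∧
      (∀ u : Fin K → ℝ, (∀ k, 0 ≤ u k) →
        concaveEnvelope K F u ≤ ((c + ∑ k, w k * u k : ℝ) : EReal)) := by
  obtain ⟨c, w, hG_one, hFG⟩ := IsGenEMerging.exists_affine_majorant hmerge hF0
  have hG_concave : ConcaveOn ℝ {v : Fin K → ℝ | ∀ k, 0 ≤ v k} fun u => c + ∑ k, w k * u k :=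
    concaveOn_const_add_sum_mul (convex_Ici 0) c w
  have h_env_le := concaveEnvelope_le hG_concave hFG
  have h_env_one : concaveEnvelope K F (fun _ => 1) ≤ 1 := by
    simpa only [mul_one, hG_one, EReal.coe_one] using h_env_le (fun _ => 1)
  have h_env_nonneg : (0 : EReal) ≤ concaveEnvelope K F (fun _ => 1) :=
    (EReal.coe_nonneg.mpr (hF0 _ fun _ => zero_le_one)).trans
      (le_concaveEnvelope fun _ => zero_le_one)
  exact ⟨ne_top_of_le_ne_top (EReal.coe_ne_top 1) h_env_one,
    ne_bot_of_le_ne_bot EReal.zero_ne_bot h_env_nonneg, h_env_one, c, w,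
    by simp only [mul_one, hG_one, le_refl], fun u hu => (hF0 u hu).trans (hFG u hu),
    fun u _ => h_env_le u⟩

/-- if `F` is a generalised e-merging function (with respect to
finite probability spaces), then its concave envelope is finite at `(1,…,1)`,
at most 1 there, and is dominated on the orthant by an affine function `G`
with `G(1,…,1) ≤ 1` and `G ≥ 0` on the orthant. -/
theorem stmt_12 (K : ℕ) (hK : 1 ≤ K) (F : (Fin K → ℝ) → ℝ)
    (hF0 : ∀ u : Fin K → ℝ, (∀ k, 0 ≤ u k) → 0 ≤ F u)
    (hmerge : ∀ (n : ℕ) (q : Fin n → ℝ) (E : Fin K → Fin n → ℝ),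
      (∀ j, 0 ≤ q j) → ∑ j, q j = 1 →
      (∀ k j, 0 ≤ E k j) → (∀ k, ∑ j, q j * E k j ≤ 1) →
      ∑ j, q j * F (fun k => E k j) ≤ 1) :
    concaveEnvelope K F (fun _ => 1) ≠ ⊤ ∧
    concaveEnvelope K F (fun _ => 1) ≠ ⊥ ∧
    concaveEnvelope K F (fun _ => 1) ≤ 1 ∧
    ∃ (c : ℝ) (w : Fin K → ℝ),
      (c + ∑ k, w k * 1 ≤ 1) ∧
      (∀ u : Fin K → ℝ, (∀ k, 0 ≤ u k) → 0 ≤ c + ∑ k, w k * u k) ∧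
      (∀ u : Fin K → ℝ, (∀ k, 0 ≤ u k) →
        concaveEnvelope K F u ≤ ((c + ∑ k, w k * u k : ℝ) : EReal)) :=
  stmt_12_general K F hF0 hmerge
end
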